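/- (Equation (4.17)) Let φ be a 2-cocycle on 𝒦 such that φ(1,x^γ)=0, φ(x^{−σ_p},x^γ)=0 and φ(x^{2_{[q]}},x^γ)=0 for all γ∈Γ, p∈I₁, q∈J₁. If α,β∈Γ satisfy φ(x^α,x^β)≠0, then for every p∈I₁ with α_p=α_{p̄}=0 one has β_p=β_{p̄}=−1. -/

import Mathlib

noncomputable section

/-- `σ_p = −1_{[p]} − 1_{[p̄]}` (with `p̄ = p + ℓ₁`). -/
def sg (F : Type*) [Field F] (n : ℕ) (p : ℕ) : ℕ → F :=
  -Pi.single p (1 : F) - Pi.single (p + n) (1 : F)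

/-- `σ = Σ_{p∈I₁} σ_p`. -/
def sgT (F : Type*) [Field F] (n : ℕ) : ℕ → F := ∑ p ∈ Finset.Icc 1 n, sg F n p

/-- `θ(α) = Σ_{p∈J₁} α_p`. -/
def th (F : Type*) [Field F] (n : ℕ) (α : ℕ → F) : F := ∑ p ∈ Finset.Icc 1 (2 * n), α p

/-- The contact Lie algebra `𝒦` (case `ℓ⃗ = (ℓ₁,0,0,0,0,0)`, `𝒥₀ = {0}`):
the free `F`-module with basis `{x^α : α ∈ Γ}`. -/
abbrev KA (F : Type*) [Field F] (Γ : AddSubgroup (ℕ → F)) : Type _ := ↥Γ →₀ F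

/-- The basis monomial `x^α` (interpreted as `0` when `α ∉ Γ`). -/
def X2 (F : Type*) [Field F] (Γ : AddSubgroup (ℕ → F)) (α : ℕ → F) : KA F Γ :=
  @dite _ (α ∈ Γ) (Classical.dec _) (fun h => Finsupp.single ⟨α, h⟩ 1) (fun _ => 0)

/-- The bracket on basis elements:
`[x^α,x^β] = Σ_{p∈I₁}(α_pβ_{p̄}−α_{p̄}β_p)x^{α+β+σ_p} + ((2−θ(α))β₀−α₀(2−θ(β)))x^{α+β}`. -/
def brkB (F : Type*) [Field F] (n : ℕ) (Γ : AddSubgroup (ℕ → F)) (a b : ↥Γ) : KA F Γ :=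
  (∑ p ∈ Finset.Icc 1 n,
    (a.1 p * b.1 (p + n) - a.1 (p + n) * b.1 p) • X2 F Γ (a.1 + b.1 + sg F n p)) +
    ((2 - th F n a.1) * b.1 0 - a.1 0 * (2 - th F n b.1)) • X2 F Γ (a.1 + b.1)

/-- The contact Lie bracket on `𝒦`, extended bilinearly from the basis. -/
def brk2 (F : Type*) [Field F] (n : ℕ) (Γ : AddSubgroup (ℕ → F)) (u v : KA F Γ) : KA F Γ :=
  u.sum fun a ca => v.sum fun b cb => (ca * cb) • brkB F n Γ a b

/-- `p = p_α`: `p` is the least index in `I₁` with `(α_p, α_{p̄}) ≠ (−1,−1)`. -/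
def isPmin (F : Type*) [Field F] (n : ℕ) (α : ℕ → F) (p : ℕ) : Prop :=
  p ∈ Finset.Icc 1 n ∧ (α p ≠ -1 ∨ α (p + n) ≠ -1) ∧
    ∀ q ∈ Finset.Icc 1 n, q < p → (α q = -1 ∧ α (q + n) = -1)

/-! For `r ∈ {p, p̄}` the bracket `[x^w, x^{2_{[r]}}]` is a multiple of `x^{w + 2_{[r]} + σ_p}`
whose coefficient is `±2` times the coordinate of `w` opposite to `r`. Since `α` vanishes at
that coordinate, `x^{2_{[r]}}` commutes with `x^α`, and as `φ(x^{2_{[r]}}, ·) = 0` the cocycle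
identity forces `φ([x^w, x^{2_{[r]}}], x^α) = 0`. Choosing `w` with `w + 2_{[r]} + σ_p = β`
makes this `±2 (β_s + 1) φ(x^β, x^α) = 0` at the opposite coordinate `s`. -/

theorem LinearMap.apply_bracket_eq_zero_of_cocycle {R M : Type*} [CommRing R] [AddCommMonoid M]
    [Module R M] (brk : M → M → M) (φ : M →ₗ[R] M →ₗ[R] R)
    (hskew : ∀ u v, φ u v = -φ v u)
    (hjac : ∀ u v w, φ (brk u v) w + φ (brk v w) u + φ (brk w u) v = 0)
    {v w : M} (hv : ∀ x, φ v x = 0) (hvw : brk v w = 0) (u : M) :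
    φ (brk u v) w = 0 := by
  have := hjac u v w
  rwa [hvw, map_zero, LinearMap.zero_apply, hskew (brk w u), hv, neg_zero, add_zero,
    add_zero] at this

section ContactAlgebra

variable {F : Type*} [Field F] {n : ℕ} {Γ : AddSubgroup (ℕ → F)}

lemma X2_of_mem {γ : ℕ → F} (h : γ ∈ Γ) : X2 F Γ γ = Finsupp.single ⟨γ, h⟩ 1 := by
  rw [X2, dif_pos h]

lemma apply_eq_zero_of_forall_X2 (φ : KA F Γ →ₗ[F] KA F Γ →ₗ[F] F) (v : KA F Γ)
    (h : ∀ γ ∈ Γ, φ v (X2 F Γ γ) = 0) (u : KA F Γ) : φ v u = 0 := by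
  suffices φ v = 0 from LinearMap.congr_fun this u
  refine Finsupp.lhom_ext' fun γ => LinearMap.ext_ring ?_
  simpa [X2_of_mem γ.2] using h γ.1 γ.2

lemma brk2_X2 {α β : ℕ → F} (hα : α ∈ Γ) (hβ : β ∈ Γ) :
    brk2 F n Γ (X2 F Γ α) (X2 F Γ β) = brkB F n Γ ⟨α, hα⟩ ⟨β, hβ⟩ := by
  simp [X2_of_mem hα, X2_of_mem hβ, brk2]

lemma brkB_swap (a b : ↥Γ) : brkB F n Γ b a = -brkB F n Γ a b := by
  simp only [brkB, neg_add, ← Finset.sum_neg_distrib, ← neg_smul, add_comm b.1 a.1]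
  congr 1
  · exact Finset.sum_congr rfl fun p _ => by congr 1; ring
  · congr 1; ring

lemma brkB_eq_smul_of_pair {p : ℕ} (hp : p ∈ Finset.Icc 1 n) (a b : ↥Γ) (hb₀ : b.1 0 = 0)
    (hθ : th F n b.1 = 2) (hb : ∀ q ∈ Finset.Icc 1 n, q ≠ p → b.1 q = 0 ∧ b.1 (q + n) = 0) :
    brkB F n Γ a b =
      (a.1 p * b.1 (p + n) - a.1 (p + n) * b.1 p) • X2 F Γ (a.1 + b.1 + sg F n p) := by
  rw [brkB, Finset.sum_eq_single_of_mem p hp fun q hq hqp => by simp [hb q hq hqp], hθ, hb₀]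
  simp

lemma th_single {r : ℕ} (hr : r ∈ Finset.Icc 1 (2 * n)) (c : F) :
    th F n (Pi.single r c) = c := by
  simp [th, Finset.sum_pi_single', hr]

lemma brk2_X2_single_two {p : ℕ} (hp : p ∈ Finset.Icc 1 n) {w : ℕ → F} (hw : w ∈ Γ)
    (h2 : Pi.single p (2 : F) ∈ Γ) :
    brk2 F n Γ (X2 F Γ w) (X2 F Γ (Pi.single p 2)) =
      (-2 * w (p + n)) • X2 F Γ (w + Pi.single p 2 + sg F n p) := by
  obtain ⟨hp₁, hpn⟩ := Finset.mem_Icc.mp hp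
  rw [brk2_X2 hw h2, brkB_eq_smul_of_pair hp]
  · simp [Pi.single_eq_of_ne (show p + n ≠ p by omega), neg_smul, mul_comm]
  · exact Pi.single_eq_of_ne (by omega) 2
  · exact th_single (Finset.mem_Icc.mpr ⟨hp₁, by omega⟩) 2
  · intro q hq hqp
    obtain ⟨hq₁, hqn⟩ := Finset.mem_Icc.mp hq
    exact ⟨Pi.single_eq_of_ne hqp 2, Pi.single_eq_of_ne (by omega) 2⟩

lemma brk2_X2_single_two_add {p : ℕ} (hp : p ∈ Finset.Icc 1 n) {w : ℕ → F} (hw : w ∈ Γ)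
    (h2 : Pi.single (p + n) (2 : F) ∈ Γ) :
    brk2 F n Γ (X2 F Γ w) (X2 F Γ (Pi.single (p + n) 2)) =
      (2 * w p) • X2 F Γ (w + Pi.single (p + n) 2 + sg F n p) := by
  obtain ⟨hp₁, hpn⟩ := Finset.mem_Icc.mp hp
  rw [brk2_X2 hw h2, brkB_eq_smul_of_pair hp]
  · simp [Pi.single_eq_of_ne (show p ≠ p + n by omega), mul_comm]
  · exact Pi.single_eq_of_ne (by omega) 2
  · exact th_single (Finset.mem_Icc.mpr ⟨by omega, by omega⟩) 2
  · intro q hq hqp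
    obtain ⟨hq₁, hqn⟩ := Finset.mem_Icc.mp hq
    exact ⟨Pi.single_eq_of_ne (by omega) 2, Pi.single_eq_of_ne (by omega) 2⟩

variable (φ : KA F Γ →ₗ[F] KA F Γ →ₗ[F] F) (hskew : ∀ u v : KA F Γ, φ u v = -φ v u)
  (hjac : ∀ u v w : KA F Γ,
    φ (brk2 F n Γ u v) w + φ (brk2 F n Γ v w) u + φ (brk2 F n Γ w u) v = 0)
include hskew hjac

lemma eq_of_cocycle_apply_ne_zero {r c : ℕ → F} {s : ℕ} {k : F} (hk : k ≠ 0) (hr : r ∈ Γ)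
    (hc : c ∈ Γ) (hφr : ∀ γ ∈ Γ, φ (X2 F Γ r) (X2 F Γ γ) = 0)
    (hbr : ∀ w ∈ Γ, brk2 F n Γ (X2 F Γ w) (X2 F Γ r) = (k * w s) • X2 F Γ (w + r + c))
    {α β : ℕ → F} (hα : α ∈ Γ) (hβ : β ∈ Γ) (hαs : α s = 0)
    (hφ : φ (X2 F Γ α) (X2 F Γ β) ≠ 0) : β s = r s + c s := by
  have hw : β - r - c ∈ Γ := Γ.sub_mem (Γ.sub_mem hβ hr) hc
  have hcomm : brk2 F n Γ (X2 F Γ r) (X2 F Γ α) = 0 := by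
    rw [brk2_X2 hr hα, brkB_swap, ← brk2_X2, hbr α hα, hαs, mul_zero, zero_smul, neg_zero]
  have hzero := LinearMap.apply_bracket_eq_zero_of_cocycle (brk2 F n Γ) φ hskew hjac
    (apply_eq_zero_of_forall_X2 φ _ hφr) hcomm (X2 F Γ (β - r - c))
  rw [hbr _ hw, show β - r - c + r + c = β by abel, map_smul, LinearMap.smul_apply, smul_eq_mul,
    hskew] at hzero
  have := (mul_eq_zero.mp hzero).resolve_right (neg_ne_zero.mpr hφ)
  simp only [mul_eq_zero, hk, false_or, Pi.sub_apply] at this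
  linear_combination this

end ContactAlgebra

theorem cocycle_support_condition_general
    {F : Type*} [Field F] [CharZero F] (n : ℕ) (Γ : AddSubgroup (ℕ → F))
    (hΓ1 : ∀ p ≤ 2 * n, (Pi.single p (1 : F) : ℕ → F) ∈ Γ)
    (φ : KA F Γ →ₗ[F] KA F Γ →ₗ[F] F)
    (hskew : ∀ u v : KA F Γ, φ u v = -φ v u)
    (hjac : ∀ u v w : KA F Γ,
      φ (brk2 F n Γ u v) w + φ (brk2 F n Γ v w) u + φ (brk2 F n Γ w u) v = 0)
    (h3 : ∀ q ∈ Finset.Icc 1 (2 * n), ∀ γ ∈ Γ,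
      φ (X2 F Γ (Pi.single q (2 : F))) (X2 F Γ γ) = 0) :
    ∀ α ∈ Γ, ∀ β ∈ Γ, φ (X2 F Γ α) (X2 F Γ β) ≠ 0 →
      ∀ p ∈ Finset.Icc 1 n, α p = 0 → α (p + n) = 0 →
        (β p = -1 ∧ β (p + n) = -1) := by
  intro α hα β hβ hφ p hp hαp hαpn
  obtain ⟨hp₁, hpn⟩ := Finset.mem_Icc.mp hp
  have hp' : p ∈ Finset.Icc 1 (2 * n) := Finset.mem_Icc.mpr ⟨hp₁, by omega⟩
  have hpn' : p + n ∈ Finset.Icc 1 (2 * n) := Finset.mem_Icc.mpr ⟨by omega, by omega⟩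
  have h1 : Pi.single p (1 : F) ∈ Γ := hΓ1 p (by omega)
  have h1' : Pi.single (p + n) (1 : F) ∈ Γ := hΓ1 (p + n) (by omega)
  have two_mem : ∀ r, Pi.single r (1 : F) ∈ Γ → Pi.single r (2 : F) ∈ Γ := fun r h => by
    simpa [← Pi.single_add, one_add_one_eq_two] using Γ.add_mem h h
  have hσ : sg F n p ∈ Γ := Γ.sub_mem (Γ.neg_mem h1) h1'
  constructor
  · have := eq_of_cocycle_apply_ne_zero φ hskew hjac two_ne_zero (two_mem _ h1') hσ
      (h3 _ hpn') (fun w hw => brk2_X2_single_two_add hp hw (two_mem _ h1')) hα hβ hαp hφ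
    simpa [sg, Pi.single_eq_of_ne (show p ≠ p + n by omega)] using this
  · have := eq_of_cocycle_apply_ne_zero φ hskew hjac (neg_ne_zero.mpr two_ne_zero)
      (two_mem _ h1) hσ (h3 _ hp') (fun w hw => brk2_X2_single_two hp hw (two_mem _ h1))
      hα hβ hαpn hφ
    simpa [sg, Pi.single_eq_of_ne (show p + n ≠ p by omega)] using this

/-- **equation (4.17).** If a 2-cocycle `φ` on `𝒦` vanishes on pairs
`(1,x^γ)`, `(x^{−σ_p},x^γ)`, `(x^{2_{[q]}},x^γ)` for all `γ ∈ Γ`, `p ∈ I₁`, `q ∈ J₁`, and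
`φ(x^α,x^β) ≠ 0`, then `α_p = α_{p̄} = 0` implies `β_p = β_{p̄} = −1` for `p ∈ I₁`. -/
theorem cocycle_support_condition
    {F : Type*} [Field F] [CharZero F] (n : ℕ) (Γ : AddSubgroup (ℕ → F))
    (hn : 1 ≤ n)
    (hΓ1 : ∀ p ≤ 2 * n, (Pi.single p (1 : F) : ℕ → F) ∈ Γ)
    (hΓ0 : ∃ α ∈ Γ, α 0 ≠ 0)
    (hΓs : ∀ α ∈ Γ, ∀ p, 2 * n < p → α p = 0)
    (φ : KA F Γ →ₗ[F] KA F Γ →ₗ[F] F)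
    (hskew : ∀ u v : KA F Γ, φ u v = -φ v u)
    (hjac : ∀ u v w : KA F Γ,
      φ (brk2 F n Γ u v) w + φ (brk2 F n Γ v w) u + φ (brk2 F n Γ w u) v = 0)
    (h1 : ∀ γ ∈ Γ, φ (X2 F Γ 0) (X2 F Γ γ) = 0)
    (h2 : ∀ p ∈ Finset.Icc 1 n, ∀ γ ∈ Γ, φ (X2 F Γ (-sg F n p)) (X2 F Γ γ) = 0)
    (h3 : ∀ q ∈ Finset.Icc 1 (2 * n), ∀ γ ∈ Γ,
      φ (X2 F Γ (Pi.single q (2 : F))) (X2 F Γ γ) = 0) :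
    ∀ α ∈ Γ, ∀ β ∈ Γ, φ (X2 F Γ α) (X2 F Γ β) ≠ 0 →
      ∀ p ∈ Finset.Icc 1 n, α p = 0 → α (p + n) = 0 →
        (β p = -1 ∧ β (p + n) = -1) :=
  cocycle_support_condition_general n Γ hΓ1 φ hskew hjac h3

end
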